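/- The global approximation error satisfies e_{X,X̃} := sup_{s ∈ (a, b]} |f̃(s) − f_X(s)| = max_{j ∈ {1,…,n}} E_{a_j, μ_j}[μ_j − X] ≤ max_{j ∈ {1,…,n}} p_j · (b_j − a_j)/4. -/

import Mathlib

open MeasureTheory

/-- The `j`-th region of the partition of `ℝ` induced by points `q 0 < q 1 < ⋯ < q n`:
`I_0 = (−∞, q 0]`, `I_j = (q (j−1), q j]` for `1 ≤ j ≤ n`, and `I_{n+1} = (q n, ∞)`. -/
noncomputable def seg (q : ℕ → ℝ) (n j : ℕ) : Set ℝ :=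
  if j = 0 then Set.Iic (q 0)
  else if j ≤ n then Set.Ioc (q (j - 1)) (q j)
  else Set.Ioi (q n)

/-- `p_j = P(X ∈ I_j)`. -/
noncomputable def segProb {Ω : Type*} [MeasurableSpace Ω]
    (P : Measure Ω) (X : Ω → ℝ) (q : ℕ → ℝ) (n j : ℕ) : ℝ :=
  (P {ω | X ω ∈ seg q n j}).toReal

/-- `μ_j = E[X | X ∈ I_j] = E[1_{X ∈ I_j} X] / p_j`. -/
noncomputable def segMean {Ω : Type*} [MeasurableSpace Ω]
    (P : Measure Ω) (X : Ω → ℝ) (q : ℕ → ℝ) (n j : ℕ) : ℝ :=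
  (∫ ω in {ω | X ω ∈ seg q n j}, X ω ∂P) / segProb P X q n j

/-- The induced piecewise linear approximation `f̃(s) = ∑_{j=0}^{n+1} p_j · min(s, μ_j)`. -/
noncomputable def ftilde {Ω : Type*} [MeasurableSpace Ω]
    (P : Measure Ω) (X : Ω → ℝ) (q : ℕ → ℝ) (n : ℕ) (s : ℝ) : ℝ :=
  ∑ j ∈ Finset.range (n + 2), segProb P X q n j * min s (segMean P X q n j)

/-!
On every cell `I_j` with `s ∉ I_j`, `min s` is affine on the values of `X` (either `X ≤ s` or
`s ≤ X` there), so the Jensen gap `p_j min(s, μ_j) - E[min(s, X); I_j]` vanishes and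
`f̃(s) - f_X(s)` is the gap of the single cell `I_k ∋ s`. That gap equals `E[(s - X)⁺; I_k]`
for `s ≤ μ_k` and `E[(X - s)⁺; I_k]` for `s ≥ μ_k`, so it is maximal at `s = μ_k ∈ I_k`, with
value `E[(μ_k - X)⁺; I_k] = E_{a_k,μ_k}[μ_k - X]`. As `E[(μ_k - X)⁺; I_k] = E[(X - μ_k)⁺; I_k]`,
weighting the two by `b_k - μ_k` and `μ_k - a_k` bounds `(b_k - a_k)` times the maximum by
`p_k (μ_k - a_k)(b_k - μ_k) ≤ p_k (b_k - a_k)² / 4`.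
-/

open Set

section Order

lemma csSup_image_eq_sup' {α ι β : Type*} [ConditionallyCompleteLinearOrder β] {S : Set α}
    {t : Finset ι} (ht : t.Nonempty) {g : α → β} {e : ι → β}
    (hle : ∀ s ∈ S, ∃ k ∈ t, g s ≤ e k) (hattain : ∀ k ∈ t, ∃ s ∈ S, g s = e k) :
    sSup (g '' S) = t.sup' ht e := by
  obtain ⟨k, hk, hmax⟩ := Finset.exists_mem_eq_sup' ht e
  obtain ⟨s, hs, hgs⟩ := hattain k hk
  refine IsGreatest.csSup_eq ⟨⟨s, hs, hgs.trans hmax.symm⟩, ?_⟩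
  rintro _ ⟨s, hs, rfl⟩
  obtain ⟨k, hk, hsk⟩ := hle s hs
  exact hsk.trans (Finset.le_sup' e hk)

end Order

namespace MeasureTheory

variable {Ω : Type*} [MeasurableSpace Ω] {μ : Measure Ω} {f : Ω → ℝ} {A : Set Ω}

lemma setAverage_mem_of_ordConnected {S : Set ℝ} (hS : S.OrdConnected) (hA₀ : μ A ≠ 0)
    (hA : μ A ≠ ⊤) (hf : IntegrableOn f A μ) (hfS : ∀ x ∈ A, f x ∈ S) :
    ⨍ x in A, f x ∂μ ∈ S := by
  obtain ⟨x, hxA, hx⟩ := exists_le_setAverage hA₀ hA hf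
  obtain ⟨y, hyA, hy⟩ := exists_setAverage_le hA₀ hA hf
  exact hS.out (hfS x hxA) (hfS y hyA) ⟨hx, hy⟩

lemma integral_eq_sum_setIntegral_of_partition {ι : Type*} {t : Finset ι} {B : ι → Set Ω}
    (hB : ∀ i ∈ t, NullMeasurableSet (B i) μ) (hdisj : (t : Set ι).PairwiseDisjoint B)
    (hcover : ⋃ i ∈ t, B i = univ) {g : Ω → ℝ} (hg : Integrable g μ) :
    ∫ x, g x ∂μ = ∑ i ∈ t, ∫ x in B i, g x ∂μ := by
  have hsum : g = fun x => ∑ i ∈ t, (B i).indicator g x := funext fun x => by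
    rw [← Finset.indicator_biUnion_apply t B hdisj, hcover, indicator_univ]
  conv_lhs => rw [hsum]
  rw [integral_finsetSum t fun i hi => hg.indicator₀ (hB i hi)]
  exact Finset.sum_congr rfl fun i hi => integral_indicator₀ (hB i hi)

lemma setIntegral_posPart_sub_eq_setIntegral_inter (hf : IntegrableOn f A μ) (c : ℝ) :
    ∫ x in A, (c - f x)⁺ ∂μ = ∫ x in {x | f x ≤ c} ∩ A, (c - f x) ∂μ := by
  have hT : NullMeasurableSet {x | f x ≤ c} (μ.restrict A) :=
    hf.aestronglyMeasurable.nullMeasurableSet_le aestronglyMeasurable_const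
  have hind : ∀ x, (c - f x)⁺ = {x | f x ≤ c}.indicator (fun x => c - f x) x := fun x => by
    by_cases hx : f x ≤ c
    · simp [hx]
    · simp [hx, (not_le.1 hx).le]
  simp_rw [hind]
  rw [integral_indicator₀ hT, Measure.restrict_restrict₀ hT]

lemma Integrable.const_min [IsFiniteMeasure μ] (hf : Integrable f μ) (s : ℝ) :
    Integrable (fun x => min s (f x)) μ :=
  (integrable_const s).inf hf

lemma Integrable.posPart_sub_const [IsFiniteMeasure μ] (hf : Integrable f μ) (c : ℝ) :
    Integrable (fun x => (f x - c)⁺) μ :=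
  (hf.sub (integrable_const c)).pos_part

lemma Integrable.posPart_const_sub [IsFiniteMeasure μ] (hf : Integrable f μ) (c : ℝ) :
    Integrable (fun x => (c - f x)⁺) μ :=
  ((integrable_const c).sub hf).pos_part

variable [IsFiniteMeasure μ]

/-- The contribution of a cell `A` to `f̃ s - f_X s`: a Jensen gap of the concave `min s`. -/
noncomputable def localError (μ : Measure Ω) (f : Ω → ℝ) (A : Set Ω) (s : ℝ) : ℝ :=
  μ.real A * min s (⨍ x in A, f x ∂μ) - ∫ x in A, min s (f x) ∂μ

lemma localError_of_le_setAverage (hf : IntegrableOn f A μ) {s : ℝ}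
    (hs : s ≤ ⨍ x in A, f x ∂μ) : localError μ f A s = ∫ x in A, (s - f x)⁺ ∂μ := by
  rw [localError, min_eq_left hs, ← smul_eq_mul, ← setIntegral_const,
    ← integral_sub (integrable_const s) (hf.const_min s)]
  congr 1 with x
  rcases le_total s (f x) with h | h <;> simp [h]

lemma localError_of_setAverage_le (hf : IntegrableOn f A μ) {s : ℝ}
    (hs : ⨍ x in A, f x ∂μ ≤ s) : localError μ f A s = ∫ x in A, (f x - s)⁺ ∂μ := by
  rw [localError, min_eq_right hs, ← smul_eq_mul, measure_smul_setAverage _ (measure_ne_top μ A),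
    ← integral_sub hf (hf.const_min s)]
  congr 1 with x
  rcases le_total s (f x) with h | h <;> simp [h]

lemma setIntegral_posPart_sub_setAverage_comm (hf : IntegrableOn f A μ) :
    ∫ x in A, (f x - ⨍ y in A, f y ∂μ)⁺ ∂μ = ∫ x in A, (⨍ y in A, f y ∂μ - f x)⁺ ∂μ := by
  have h := setAverage_sub_setAverage (measure_ne_top μ A) f
  rw [← sub_eq_zero, ← integral_sub (hf.posPart_sub_const _) (hf.posPart_const_sub _), ← h]
  congr 1 with x
  rcases le_total (f x) (⨍ y in A, f y ∂μ) with h | h <;> simp [h]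

lemma localError_nonneg (hf : IntegrableOn f A μ) (s : ℝ) : 0 ≤ localError μ f A s := by
  rcases le_total s (⨍ x in A, f x ∂μ) with hs | hs
  · rw [localError_of_le_setAverage hf hs]
    exact integral_nonneg fun x => posPart_nonneg _
  · rw [localError_of_setAverage_le hf hs]
    exact integral_nonneg fun x => posPart_nonneg _

lemma localError_le_localError_setAverage (hf : IntegrableOn f A μ) (s : ℝ) :
    localError μ f A s ≤ localError μ f A (⨍ x in A, f x ∂μ) := by
  rw [localError_of_le_setAverage hf le_rfl]
  rcases le_total s (⨍ x in A, f x ∂μ) with hs | hs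
  · rw [localError_of_le_setAverage hf hs]
    exact integral_mono (hf.posPart_const_sub _) (hf.posPart_const_sub _)
      fun x => posPart_mono (by linarith)
  · rw [localError_of_setAverage_le hf hs, ← setIntegral_posPart_sub_setAverage_comm hf]
    exact integral_mono (hf.posPart_sub_const _) (hf.posPart_sub_const _)
      fun x => posPart_mono (by linarith)

lemma localError_eq_zero_of_forall_le (hf : IntegrableOn f A μ) {s : ℝ} (hfs : ∀ x ∈ A, f x ≤ s) :
    localError μ f A s = 0 := by
  rcases eq_or_ne (μ A) 0 with hA | hA
  · simp [localError, Measure.restrict_eq_zero.2 hA, measureReal_def, hA]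
  rw [localError_of_setAverage_le hf
    (setAverage_mem_of_ordConnected (S := Iic s) ordConnected_Iic hA (measure_ne_top μ A) hf hfs)]
  exact setIntegral_eq_zero_of_forall_eq_zero fun x hx => posPart_eq_zero.2 (by linarith [hfs x hx])

lemma localError_eq_zero_of_forall_ge (hf : IntegrableOn f A μ) {s : ℝ} (hfs : ∀ x ∈ A, s ≤ f x) :
    localError μ f A s = 0 := by
  rcases eq_or_ne (μ A) 0 with hA | hA
  · simp [localError, Measure.restrict_eq_zero.2 hA, measureReal_def, hA]
  rw [localError_of_le_setAverage hf
    (setAverage_mem_of_ordConnected (S := Ici s) ordConnected_Ici hA (measure_ne_top μ A) hf hfs)]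
  exact setIntegral_eq_zero_of_forall_eq_zero fun x hx => posPart_eq_zero.2 (by linarith [hfs x hx])

lemma setIntegral_posPart_setAverage_sub_le (hA : NullMeasurableSet A μ)
    (hf : IntegrableOn f A μ) {lo hi : ℝ} (hfA : ∀ x ∈ A, f x ∈ Icc lo hi) :
    ∫ x in A, (⨍ y in A, f y ∂μ - f x)⁺ ∂μ ≤ μ.real A * (hi - lo) / 4 := by
  set m := ⨍ y in A, f y ∂μ
  rcases eq_or_ne (μ A) 0 with hA₀ | hA₀
  · simp [Measure.restrict_eq_zero.2 hA₀, measureReal_def, hA₀]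
  obtain ⟨hlo, hhi⟩ : m ∈ Icc lo hi :=
    setAverage_mem_of_ordConnected ordConnected_Icc hA₀ (measure_ne_top μ A) hf hfA
  rcases (hlo.trans hhi).eq_or_lt with rfl | hlohi
  · have hfm : ∀ x ∈ A, (m - f x)⁺ = 0 := fun x hx => by
      rw [le_antisymm hhi hlo, le_antisymm (hfA x hx).2 (hfA x hx).1, sub_self, posPart_zero]
    simp [setIntegral_eq_zero_of_forall_eq_zero hfm]
  have key : (hi - lo) * ∫ x in A, (m - f x)⁺ ∂μ ≤ μ.real A * ((m - lo) * (hi - m)) := by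
    calc (hi - lo) * ∫ x in A, (m - f x)⁺ ∂μ
        = ∫ x in A, ((hi - m) * (m - f x)⁺ + (m - lo) * (f x - m)⁺) ∂μ := by
          rw [integral_add ((hf.posPart_const_sub m).const_mul _)
            ((hf.posPart_sub_const m).const_mul _), integral_const_mul, integral_const_mul,
            setIntegral_posPart_sub_setAverage_comm hf]
          ring
      _ ≤ ∫ x in A, (m - lo) * (hi - m) ∂μ := by
          refine setIntegral_mono_on₀ (((hf.posPart_const_sub m).const_mul _).add
            ((hf.posPart_sub_const m).const_mul _)) (integrable_const _) hA fun x hx => ?_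
          obtain ⟨hxlo, hxhi⟩ := hfA x hx
          rcases le_total (f x) m with h | h
          · rw [posPart_eq_self.2 (by linarith), posPart_eq_zero.2 (by linarith)]
            nlinarith
          · rw [posPart_eq_zero.2 (by linarith), posPart_eq_self.2 (by linarith)]
            nlinarith
      _ = μ.real A * ((m - lo) * (hi - m)) := by rw [setIntegral_const, smul_eq_mul]
  rw [le_div_iff₀ (by norm_num : (0 : ℝ) < 4)]
  nlinarith [sq_nonneg (m - lo - (hi - m)), measureReal_nonneg (μ := μ) (s := A)]

end MeasureTheory

section Partition

variable (q : ℕ → ℝ) {n j k : ℕ}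

lemma seg_of_mem_Icc (hj : j ∈ Finset.Icc 1 n) : seg q n j = Ioc (q (j - 1)) (q j) := by
  obtain ⟨hj1, hjn⟩ := Finset.mem_Icc.1 hj
  rw [seg, if_neg (by omega), if_pos hjn]

lemma measurableSet_seg : MeasurableSet (seg q n j) := by
  unfold seg
  split_ifs <;> measurability

lemma ordConnected_seg : (seg q n j).OrdConnected := by
  unfold seg
  split_ifs <;> infer_instance

lemma seg_subset_Iic (hjn : j ≤ n) : seg q n j ⊆ Iic (q j) := by
  unfold seg
  split_ifs with hj0
  · subst hj0; exact Subset.rfl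
  · exact Ioc_subset_Iic_self

lemma seg_subset_Ioi (hj : j ≠ 0) (hjn : j ≤ n + 1) : seg q n j ⊆ Ioi (q (j - 1)) := by
  rw [seg, if_neg hj]
  split_ifs with hjn'
  · exact Ioc_subset_Ioi_self
  · obtain rfl : j = n + 1 := by omega
    exact Subset.rfl

lemma iUnion_seg : ⋃ j ∈ Finset.range (n + 2), seg q n j = univ := by
  refine eq_univ_of_forall fun x => mem_iUnion₂.2 ?_
  by_cases h0 : x ≤ q 0
  · exact ⟨0, by simp, by simpa [seg] using h0⟩
  by_cases hn : q n < x
  · refine ⟨n + 1, by simp, ?_⟩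
    simpa [seg] using hn
  -- `x` lies in the segment ending at the first `q k` above it
  have hex : ∃ k, x ≤ q k := ⟨n, not_lt.1 hn⟩
  have hk0 : Nat.find hex ≠ 0 := fun h => h0 (h ▸ Nat.find_spec hex)
  have hkn : Nat.find hex ≤ n := Nat.find_min' hex (not_lt.1 hn)
  refine ⟨Nat.find hex, Finset.mem_range.2 (by omega), ?_⟩
  rw [seg_of_mem_Icc q (Finset.mem_Icc.2 ⟨by omega, hkn⟩)]
  exact ⟨not_le.1 (Nat.find_min hex (by omega)), Nat.find_spec hex⟩

lemma pairwiseDisjoint_seg (hq : MonotoneOn q (Iic n)) :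
    (Finset.range (n + 2) : Set ℕ).PairwiseDisjoint (seg q n) := by
  have key : ∀ i j, i < j → j ≤ n + 1 → Disjoint (seg q n i) (seg q n j) := fun i j hij hj =>
    (Iic_disjoint_Ioi (hq (mem_Iic.2 (by omega)) (mem_Iic.2 (by omega)) (by omega))).mono
      (seg_subset_Iic q (by omega)) (seg_subset_Ioi q (by omega) hj)
  intro i hi j hj hij
  simp only [Finset.coe_range, mem_Iio] at hi hj
  rcases hij.lt_or_gt with h | h
  · exact key i j h (by omega)
  · exact (key j i h (by omega)).symm

lemma exists_mem_seg_of_mem_Ioc {s : ℝ} (hs : s ∈ Ioc (q 0) (q n)) :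
    ∃ k ∈ Finset.Icc 1 n, s ∈ seg q n k := by
  obtain ⟨k, hk, hsk⟩ := mem_iUnion₂.1 ((iUnion_seg q (n := n)).symm ▸ mem_univ s)
  refine ⟨k, Finset.mem_Icc.2 ⟨Nat.one_le_iff_ne_zero.2 ?_, Nat.lt_succ_iff.1 ?_⟩, hsk⟩
  · rintro rfl
    exact (seg_subset_Iic q (Nat.zero_le n) hsk).not_gt hs.1
  · by_contra hkn
    obtain rfl : k = n + 1 := by rw [Finset.mem_range] at hk; omega
    exact (seg_subset_Ioi q (Nat.succ_ne_zero n) le_rfl hsk).not_ge hs.2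

lemma seg_subset_Ioc (hq : MonotoneOn q (Iic n)) (hk : k ∈ Finset.Icc 1 n) :
    seg q n k ⊆ Ioc (q 0) (q n) := by
  obtain ⟨hk1, hkn⟩ := Finset.mem_Icc.1 hk
  rw [seg_of_mem_Icc q hk]
  exact Ioc_subset_Ioc (hq (mem_Iic.2 (Nat.zero_le n)) (mem_Iic.2 (by omega)) (Nat.zero_le _))
    (hq (mem_Iic.2 hkn) (mem_Iic.2 le_rfl) hkn)

end Partition

section Segments

variable {Ω : Type*} [MeasurableSpace Ω] {P : Measure Ω} {X : Ω → ℝ} {q : ℕ → ℝ} {n j k : ℕ}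

lemma segMean_eq_setAverage : segMean P X q n j = ⨍ ω in X ⁻¹' seg q n j, X ω ∂P := by
  rw [setAverage_eq, smul_eq_mul, segMean, segProb, measureReal_def, inv_mul_eq_div]
  rfl

lemma segMean_mem_seg (hX : Integrable X P) (hpos : 0 < segProb P X q n j) :
    segMean P X q n j ∈ seg q n j := by
  obtain ⟨hP₀, hP⟩ := ENNReal.toReal_pos_iff.1 hpos
  rw [segMean_eq_setAverage]
  exact setAverage_mem_of_ordConnected (ordConnected_seg q) hP₀.ne' hP.ne hX.integrableOn
    fun ω hω => hω

variable [IsFiniteMeasure P]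

lemma ftilde_sub_integral_min (hX : Integrable X P) (hq : MonotoneOn q (Iic n)) (s : ℝ) :
    ftilde P X q n s - ∫ ω, min s (X ω) ∂P
      = ∑ j ∈ Finset.range (n + 2), localError P X (X ⁻¹' seg q n j) s := by
  rw [integral_eq_sum_setIntegral_of_partition
      (fun j _ => hX.aemeasurable.nullMeasurableSet_preimage (measurableSet_seg q))
      (fun i hi j hj hij => (pairwiseDisjoint_seg q hq hi hj hij).preimage X)
      (by rw [← preimage_iUnion₂, iUnion_seg, preimage_univ]) (hX.const_min s),
    ftilde, ← Finset.sum_sub_distrib]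
  refine Finset.sum_congr rfl fun j _ => ?_
  rw [localError, segMean_eq_setAverage]
  rfl

lemma abs_ftilde_sub_integral_min_of_mem_seg (hX : Integrable X P) (hq : MonotoneOn q (Iic n))
    (hk : k ∈ Finset.Icc 1 n) {s : ℝ} (hs : s ∈ seg q n k) :
    |ftilde P X q n s - ∫ ω, min s (X ω) ∂P| = localError P X (X ⁻¹' seg q n k) s := by
  obtain ⟨hk1, hkn⟩ := Finset.mem_Icc.1 hk
  rw [← abs_of_nonneg (localError_nonneg hX.integrableOn s), ftilde_sub_integral_min hX hq s]
  congr 1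
  refine Finset.sum_eq_single_of_mem k (Finset.mem_range.2 (by omega)) fun j hj hjk => ?_
  have hjn : j ≤ n + 1 := Nat.lt_succ_iff.1 (Finset.mem_range.1 hj)
  rcases hjk.lt_or_gt with hjk | hjk
  · refine localError_eq_zero_of_forall_le hX.integrableOn fun ω hω => ?_
    calc X ω ≤ q j := seg_subset_Iic q (by omega) hω
      _ ≤ q (k - 1) := hq (mem_Iic.2 (by omega)) (mem_Iic.2 (by omega)) (by omega)
      _ ≤ s := (seg_subset_Ioi q (by omega) (by omega) hs).le
  · refine localError_eq_zero_of_forall_ge hX.integrableOn fun ω hω => ?_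
    calc s ≤ q k := seg_subset_Iic q hkn hs
      _ ≤ q (j - 1) := hq (mem_Iic.2 (by omega)) (mem_Iic.2 (by omega)) (by omega)
      _ ≤ X ω := (seg_subset_Ioi q (by omega) hjn hω).le

lemma setIntegral_segMean_sub_eq_localError (hX : Integrable X P) (hk : k ∈ Finset.Icc 1 n)
    (hpos : 0 < segProb P X q n k) :
    ∫ ω in {ω | X ω ∈ Ioc (q (k - 1)) (segMean P X q n k)}, (segMean P X q n k - X ω) ∂P
      = localError P X (X ⁻¹' seg q n k) (segMean P X q n k) := by
  have hmk : segMean P X q n k ≤ q k := by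
    have hmean := segMean_mem_seg hX hpos
    rw [seg_of_mem_Icc q hk] at hmean
    exact hmean.2
  rw [segMean_eq_setAverage] at hmk ⊢
  rw [localError_of_le_setAverage hX.integrableOn le_rfl,
    setIntegral_posPart_sub_eq_setIntegral_inter hX.integrableOn]
  set m := ⨍ ω in X ⁻¹' seg q n k, X ω ∂P
  congr 2
  ext ω
  simp only [mem_ofPred_eq, mem_inter_iff, mem_preimage, mem_Ioc, seg_of_mem_Icc q hk]
  exact ⟨fun h => ⟨h.2, h.1, h.2.trans hmk⟩, fun h => ⟨h.2.1, h.1⟩⟩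

lemma setIntegral_segMean_sub_le (hX : Integrable X P) (hk : k ∈ Finset.Icc 1 n)
    (hpos : 0 < segProb P X q n k) :
    ∫ ω in {ω | X ω ∈ Ioc (q (k - 1)) (segMean P X q n k)}, (segMean P X q n k - X ω) ∂P
      ≤ segProb P X q n k * (q k - q (k - 1)) / 4 := by
  rw [setIntegral_segMean_sub_eq_localError hX hk hpos, segMean_eq_setAverage,
    localError_of_le_setAverage hX.integrableOn le_rfl]
  exact setIntegral_posPart_setAverage_sub_le
    (hX.aemeasurable.nullMeasurableSet_preimage (measurableSet_seg q)) hX.integrableOn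
    fun ω hω => Ioc_subset_Icc_self (seg_of_mem_Icc q hk ▸ hω)

end Segments

theorem global_error_formula_general {Ω : Type*} [MeasurableSpace Ω]
    (P : Measure Ω) [IsProbabilityMeasure P]
    (X : Ω → ℝ) (hX : Integrable X P)
    (a b : ℝ) (n : ℕ) (hn : 1 ≤ n)
    (q : ℕ → ℝ) (hq0 : q 0 = a) (hqn : q n = b)
    (hmono : ∀ i < n, q i < q (i + 1))
    (hpos : ∀ j ≤ n + 1, 0 < segProb P X q n j) :
    (sSup ((fun s => |ftilde P X q n s - ∫ ω, min s (X ω) ∂P|) '' Set.Ioc a b)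
        = (Finset.Icc 1 n).sup' (Finset.nonempty_Icc.2 hn)
            (fun j => ∫ ω in {ω | X ω ∈ Set.Ioc (q (j - 1)) (segMean P X q n j)},
              (segMean P X q n j - X ω) ∂P)) ∧
      (Finset.Icc 1 n).sup' (Finset.nonempty_Icc.2 hn)
          (fun j => ∫ ω in {ω | X ω ∈ Set.Ioc (q (j - 1)) (segMean P X q n j)},
            (segMean P X q n j - X ω) ∂P)
        ≤ (Finset.Icc 1 n).sup' (Finset.nonempty_Icc.2 hn)
            (fun j => segProb P X q n j * (q j - q (j - 1)) / 4) := by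
  have hq : MonotoneOn q (Iic n) := monotoneOn_of_le_succ ordConnected_Iic
    fun i _ _ hi => (hmono i (Order.succ_eq_add_one i ▸ hi : i + 1 ≤ n)).le
  have hposk : ∀ k ∈ Finset.Icc 1 n, 0 < segProb P X q n k := fun k hk =>
    hpos k ((Finset.mem_Icc.1 hk).2.trans n.le_succ)
  subst hq0 hqn
  refine ⟨csSup_image_eq_sup' _ (fun s hs => ?_) (fun k hk => ?_),
    Finset.sup'_mono_fun fun k hk => setIntegral_segMean_sub_le hX hk (hposk k hk)⟩
  · obtain ⟨k, hk, hsk⟩ := exists_mem_seg_of_mem_Ioc q hs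
    refine ⟨k, hk, ?_⟩
    rw [abs_ftilde_sub_integral_min_of_mem_seg hX hq hk hsk,
      setIntegral_segMean_sub_eq_localError hX hk (hposk k hk), segMean_eq_setAverage]
    exact localError_le_localError_setAverage hX.integrableOn s
  · have hmean := segMean_mem_seg hX (hposk k hk)
    refine ⟨_, seg_subset_Ioc q hq hk hmean, ?_⟩
    rw [abs_ftilde_sub_integral_min_of_mem_seg hX hq hk hmean,
      setIntegral_segMean_sub_eq_localError hX hk (hposk k hk)]

/-- The global approximation error satisfies
`e_{X,X̃} = sup_{s ∈ (a,b]} |f̃(s) − f_X(s)| = max_{j ∈ {1,…,n}} E_{a_j,μ_j}[μ_j − X]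
  ≤ max_{j ∈ {1,…,n}} p_j (b_j − a_j)/4`. -/
theorem global_error_formula {Ω : Type*} [MeasurableSpace Ω]
    (P : Measure Ω) [IsProbabilityMeasure P]
    (X : Ω → ℝ) (hX : Integrable X P)
    (a b : ℝ) (hab : a < b) (n : ℕ) (hn : 1 ≤ n)
    (q : ℕ → ℝ) (hq0 : q 0 = a) (hqn : q n = b)
    (hmono : ∀ i < n, q i < q (i + 1))
    (hpos : ∀ j ≤ n + 1, 0 < segProb P X q n j) :
    (sSup ((fun s => |ftilde P X q n s - ∫ ω, min s (X ω) ∂P|) '' Set.Ioc a b)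
        = (Finset.Icc 1 n).sup' (Finset.nonempty_Icc.2 hn)
            (fun j => ∫ ω in {ω | X ω ∈ Set.Ioc (q (j - 1)) (segMean P X q n j)},
              (segMean P X q n j - X ω) ∂P)) ∧
      (Finset.Icc 1 n).sup' (Finset.nonempty_Icc.2 hn)
          (fun j => ∫ ω in {ω | X ω ∈ Set.Ioc (q (j - 1)) (segMean P X q n j)},
            (segMean P X q n j - X ω) ∂P)
        ≤ (Finset.Icc 1 n).sup' (Finset.nonempty_Icc.2 hn)
            (fun j => segProb P X q n j * (q j - q (j - 1)) / 4) :=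
  global_error_formula_general P X hX a b n hn q hq0 hqn hmono hpos
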